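/- Every (m+2)-angulation Γ of the annulus A(p,q) contains at least one bridging arc; that is, at least one σ-orbit of arcs of Γ consists of bridging arcs. -/

import Mathlib

namespace ClusterAnnulus

/-! ## The combinatorial model of the annulus `A(p,q)`

We model the annulus `A(p,q)` by the strip `S = ℝ × [0,1]` together with the shift `σ`
acting by `σ(x,0) = (x + m·p, 0)` on the bottom boundary and `σ(x,1) = (x + m·q, 1)` on
the top boundary.  Marked points are `(i,0)` and `(j,1)` for integers `i, j`. -/

/-- Marked points on the two boundary lines of the strip: `Pt.bot x` is the point
`(x,0)` and `Pt.top x` is the point `(x,1)`. -/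
inductive Pt : Type
  | bot : ℤ → Pt
  | top : ℤ → Pt
  deriving DecidableEq

/-- Combinatorial (isotopy classes of) arcs in the strip:
* `bridging x y` is the straight segment from `(x,0)` to `(y,1)`;
* `botPeriph u v` is an embedded arc in the open strip joining `(u,0)` to `(v,0)`;
* `topPeriph u v` is an embedded arc in the open strip joining `(u,1)` to `(v,1)`. -/
inductive Arc : Type
  | bridging : ℤ → ℤ → Arc
  | botPeriph : ℤ → ℤ → Arc
  | topPeriph : ℤ → ℤ → Arc
  deriving DecidableEq

/-- An arc is bridging if it joins the two boundary components. -/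
def Arc.IsBridging : Arc → Prop
  | .bridging _ _ => True
  | _ => False

/-- `m`-arc conditions: a bridging arc `β(x,y)` requires `x ≡ y (mod m)`; a peripheral
arc `π(u,v)` requires `v = u + k·m + 1` for some `k ≥ 1`. -/
def IsMArc (m : ℕ) : Arc → Prop
  | .bridging x y => x ≡ y [ZMOD (m : ℤ)]
  | .botPeriph u v => ∃ k : ℤ, 1 ≤ k ∧ v = u + k * (m : ℤ) + 1
  | .topPeriph u v => ∃ k : ℤ, 1 ≤ k ∧ v = u + k * (m : ℤ) + 1

/-- The combinatorial crossing relation between arcs. -/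
def Cross : Arc → Arc → Prop
  | .bridging x y, .bridging x' y' => (x - x') * (y - y') < 0
  | .bridging x _, .botPeriph u v => u < x ∧ x < v
  | .botPeriph u v, .bridging x _ => u < x ∧ x < v
  | .bridging _ y, .topPeriph u v => u < y ∧ y < v
  | .topPeriph u v, .bridging _ y => u < y ∧ y < v
  | .botPeriph u v, .botPeriph u' v' => (u < u' ∧ u' < v ∧ v < v') ∨ (u' < u ∧ u < v' ∧ v' < v)
  | .topPeriph u v, .topPeriph u' v' => (u < u' ∧ u' < v ∧ v < v') ∨ (u' < u ∧ u < v' ∧ v' < v)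
  | .botPeriph _ _, .topPeriph _ _ => False
  | .topPeriph _ _, .botPeriph _ _ => False

/-- The `n`-th power of the shift `σ` acting on arcs: it translates bottom endpoints
by `n·m·p` and top endpoints by `n·m·q`. -/
def shiftArc (m p q : ℕ) (n : ℤ) : Arc → Arc
  | .bridging x y => .bridging (x + n * ((m : ℤ) * p)) (y + n * ((m : ℤ) * q))
  | .botPeriph u v => .botPeriph (u + n * ((m : ℤ) * p)) (v + n * ((m : ℤ) * p))
  | .topPeriph u v => .topPeriph (u + n * ((m : ℤ) * q)) (v + n * ((m : ℤ) * q))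

/-- Two arcs lie in the same `σ`-orbit. -/
def SameOrbit (m p q : ℕ) (a b : Arc) : Prop := ∃ n : ℤ, shiftArc m p q n a = b

/-- Possible sides of a face of an `(m+2)`-angulation of the strip: an arc, a bottom
boundary segment `[i,i+1] × {0}`, or a top boundary segment `[j,j+1] × {1}`. -/
inductive Side : Type
  | arc : Arc → Side
  | botSeg : ℤ → Side
  | topSeg : ℤ → Side
  deriving DecidableEq

/-- The endpoints of an arc. -/
def Arc.endpoints : Arc → Finset Pt
  | .bridging x y => {Pt.bot x, Pt.top y}
  | .botPeriph u v => {Pt.bot u, Pt.bot v}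
  | .topPeriph u v => {Pt.top u, Pt.top v}

/-- The endpoints of a side. -/
def Side.endpoints : Side → Finset Pt
  | .arc a => a.endpoints
  | .botSeg i => {Pt.bot i, Pt.bot (i + 1)}
  | .topSeg j => {Pt.top j, Pt.top (j + 1)}

/-- The `n`-th power of the shift `σ` acting on sides. -/
def shiftSide (m p q : ℕ) (n : ℤ) : Side → Side
  | .arc a => .arc (shiftArc m p q n a)
  | .botSeg i => .botSeg (i + n * ((m : ℤ) * p))
  | .topSeg j => .topSeg (j + n * ((m : ℤ) * q))

/-- A rational "angle key" recording the counterclockwise angular position, at a marked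
point, of an arc incident to that marked point (junk value `37` if the point is not an
endpoint of the arc).  Arcs incident to a common marked point are pairwise noncrossing
in an angulation, and their angular order around the point is strictly monotone in this
key. -/
def angKey : Arc → Pt → ℚ
  | .bridging x y, .bot z =>
      if z = x then 1 / 2 - (y : ℚ) / (2 * (1 + |(y : ℚ)|)) else 37
  | .bridging x y, .top z =>
      if z = y then -1 + (x : ℚ) / (2 * (1 + |(x : ℚ)|)) else 37
  | .botPeriph u v, .bot z =>
      if z = u then -1 / ((v : ℚ) - (u : ℚ))
      else if z = v then 2 - 1 / ((v : ℚ) - (u : ℚ)) else 37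
  | .topPeriph u v, .top z =>
      if z = u then 1 / ((v : ℚ) - (u : ℚ))
      else if z = v then -2 - 1 / ((v : ℚ) - (u : ℚ)) else 37
  | _, _ => 37

/-- `CwFollows a b pt` : the arcs `a` and `b` are both incident to the marked point
`pt` and `a` follows `b` in the clockwise direction around `pt` (i.e. the
counterclockwise angle of `a` at `pt` is smaller than that of `b`). -/
def CwFollows (a b : Arc) (pt : Pt) : Prop :=
  pt ∈ a.endpoints ∧ pt ∈ b.endpoints ∧ angKey a pt < angKey b pt

/-- An `(m+2)`-angulation of the annulus `A(p,q)`, presented in the universal cover: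
a `σ`-invariant set of pairwise noncrossing `m`-arcs with exactly `p + q` orbits
under `σ`, together with its set of faces; every face has exactly `m+2` sides, each
side of a face is an arc of the angulation or a boundary segment, each arc bounds
exactly two faces, each boundary segment bounds exactly one face, and around each
marked point a face has either no sides or exactly two sides (polygon condition). -/
structure Angulation (m p q : ℕ) : Type where
  arcs : Set Arc
  faces : Set (Finset Side)
  marc : ∀ a ∈ arcs, IsMArc m a
  shift_mem : ∀ a : Arc, a ∈ arcs ↔ shiftArc m p q 1 a ∈ arcs
  noncross : ∀ a ∈ arcs, ∀ b ∈ arcs, ¬ Cross a b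
  orbit_count : ∃ reps : Finset Arc, reps.card = p + q ∧ ↑reps ⊆ arcs ∧
      (∀ a ∈ arcs, ∃ r ∈ reps, SameOrbit m p q a r) ∧
      (∀ r ∈ reps, ∀ r' ∈ reps, SameOrbit m p q r r' → r = r')
  face_card : ∀ F ∈ faces, F.card = m + 2
  face_sides : ∀ F ∈ faces, ∀ s ∈ F,
      (∃ a ∈ arcs, s = Side.arc a) ∨ (∃ i : ℤ, s = Side.botSeg i) ∨ (∃ j : ℤ, s = Side.topSeg j)
  shift_face : ∀ F : Finset Side, F ∈ faces ↔ F.image (shiftSide m p q 1) ∈ faces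
  arc_two_faces : ∀ a ∈ arcs, ∃ F ∈ faces, ∃ G ∈ faces, F ≠ G ∧
      Side.arc a ∈ F ∧ Side.arc a ∈ G ∧ ∀ H ∈ faces, Side.arc a ∈ H → H = F ∨ H = G
  botSeg_face : ∀ i : ℤ, ∃! F : Finset Side, F ∈ faces ∧ Side.botSeg i ∈ F
  topSeg_face : ∀ j : ℤ, ∃! F : Finset Side, F ∈ faces ∧ Side.topSeg j ∈ F
  face_polygon : ∀ F ∈ faces, ∀ pt : Pt,
      (F.filter (fun s => pt ∈ s.endpoints)).card = 0 ∨
      (F.filter (fun s => pt ∈ s.endpoints)).card = 2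

end ClusterAnnulus
namespace ClusterAnnulus

/-! ### Auxiliary material for the proof -/

open Finset

/-- Integer positions of the bottom endpoints of a side. -/
def botPts : Side → Finset ℤ
  | .botSeg i => {i, i + 1}
  | .arc (.botPeriph u v) => {u, v}
  | .arc (.bridging x _) => {x}
  | _ => ∅

/-- Whether an arc covers the point `1/2` of the bottom boundary. -/
def coversArcB : Arc → Bool
  | .botPeriph u v => decide (u ≤ 0) && decide (1 ≤ v)
  | _ => false

/-- Whether a side covers the point `1/2` of the bottom boundary. -/
def coversB : Side → Bool
  | .arc a => coversArcB a
  | .botSeg i => decide (i = 0)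
  | _ => false

lemma mem_botPts (s : Side) (x : ℤ) : Pt.bot x ∈ s.endpoints ↔ x ∈ botPts s := by
  cases s with
  | arc a => cases a <;> simp [Side.endpoints, Arc.endpoints, botPts]
  | botSeg i => simp [Side.endpoints, botPts]
  | topSeg j => simp [Side.endpoints, botPts]

lemma shiftArc_shiftArc (m p q : ℕ) (n k : ℤ) (a : Arc) :
    shiftArc m p q n (shiftArc m p q k a) = shiftArc m p q (n + k) a := by
  cases a <;> simp [shiftArc] <;> ring_nf <;> constructor <;> trivial

lemma mem_arcs_shift {m p q : ℕ} (Γ : Angulation m p q) (a : Arc) (ha : a ∈ Γ.arcs)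
    (n : ℤ) : shiftArc m p q n a ∈ Γ.arcs := by
  induction n using Int.induction_on with
  | zero => cases a <;> simpa [shiftArc] using ha
  | succ n ih =>
      have h := (Γ.shift_mem (shiftArc m p q n a)).mp ih
      rw [shiftArc_shiftArc] at h
      simpa [add_comm] using h
  | pred n ih =>
      refine (Γ.shift_mem (shiftArc m p q (-n - 1) a)).mpr ?_
      rw [shiftArc_shiftArc]
      simpa [show (1 : ℤ) + (-n - 1) = -n by ring] using ih

/-- Parity lemma: a face of an angulation with no bridging arcs is crossed an even
number of times by the vertical line over `1/2` on the bottom boundary. -/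
lemma face_parity {m p q : ℕ} (Γ : Angulation m p q)
    (hnb : ∀ a ∈ Γ.arcs, ¬ a.IsBridging)
    (F : Finset Side) (hF : F ∈ Γ.faces) :
    (F.filter (fun s => coversB s)).card % 2 = 0 := by
  classical
  set V : Finset ℤ := (F.biUnion botPts).filter (fun x => x ≤ 0) with hV
  have hsub : ∀ s ∈ F, V.filter (fun x => Pt.bot x ∈ s.endpoints)
      = (botPts s).filter (fun x => x ≤ 0) := by
    intro s hs
    ext x
    simp only [hV, Finset.mem_filter, Finset.mem_biUnion, mem_botPts]
    constructor
    · rintro ⟨⟨_, hx⟩, hbs⟩; exact ⟨hbs, hx⟩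
    · rintro ⟨hbs, hx⟩; exact ⟨⟨⟨s, hs, hbs⟩, hx⟩, hbs⟩
  -- per-side parity
  have hside : ∀ s ∈ F, ((botPts s).filter (fun x => x ≤ 0)).card % 2
      = (if coversB s then 1 else 0) % 2 := by
    intro s hs
    rcases Γ.face_sides F hF s hs with ⟨a, ha, rfl⟩ | ⟨i, rfl⟩ | ⟨j, rfl⟩
    · cases a with
      | bridging x y => exact absurd trivial (hnb _ ha)
      | botPeriph u v =>
          have huv : u < v := by
            obtain ⟨k, hk1, hk2⟩ := Γ.marc _ ha
            have : 0 ≤ k * (m : ℤ) := mul_nonneg (by omega) (by positivity)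
            omega
          have hne : u ≠ v := huv.ne
          have hcard : ((botPts (Side.arc (Arc.botPeriph u v))).filter
              (fun x => x ≤ 0)).card
              = (if u ≤ 0 then 1 else 0) + (if v ≤ 0 then 1 else 0) := by
            simp only [botPts, Finset.filter_insert, Finset.filter_singleton]
            split_ifs <;> simp_all
          rw [hcard]
          simp only [coversB, coversArcB, Bool.and_eq_true, decide_eq_true_eq]
          split_ifs <;> omega
      | topPeriph u v => simp [botPts, coversB, coversArcB]
    · have hcard : ((botPts (Side.botSeg i)).filter (fun x => x ≤ 0)).card
          = (if i ≤ 0 then 1 else 0) + (if i + 1 ≤ 0 then 1 else 0) := by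
        have hne : i ≠ i + 1 := by omega
        simp only [botPts, Finset.filter_insert, Finset.filter_singleton]
        split_ifs <;> simp_all
      rw [hcard]
      simp only [coversB, decide_eq_true_eq]
      split_ifs <;> omega
    · simp [botPts, coversB]
  -- the degree sum is even
  have hdeg : (∑ x ∈ V, (F.filter (fun s => Pt.bot x ∈ s.endpoints)).card) % 2 = 0 := by
    rw [Finset.sum_nat_mod]
    have : ∀ x ∈ V, (F.filter (fun s => Pt.bot x ∈ s.endpoints)).card % 2 = 0 := by
      intro x _
      rcases Γ.face_polygon F hF (Pt.bot x) with h | h <;> simp [h]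
    rw [Finset.sum_congr rfl this]
    simp
  -- swap the two sums
  have hswap : (∑ x ∈ V, (F.filter (fun s => Pt.bot x ∈ s.endpoints)).card)
      = ∑ s ∈ F, ((botPts s).filter (fun x => x ≤ 0)).card := by
    have h1 : (∑ x ∈ V, (F.filter (fun s => Pt.bot x ∈ s.endpoints)).card)
        = ∑ x ∈ V, ∑ s ∈ F, (if Pt.bot x ∈ s.endpoints then 1 else 0) := by
      refine Finset.sum_congr rfl fun x _ => ?_
      rw [Finset.card_filter]
    rw [h1, Finset.sum_comm]
    refine Finset.sum_congr rfl fun s hs => ?_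
    rw [← Finset.card_filter, hsub s hs]
  have hfin : (F.filter (fun s => coversB s)).card % 2
      = (∑ x ∈ V, (F.filter (fun s => Pt.bot x ∈ s.endpoints)).card) % 2 := by
    rw [hswap, Finset.card_filter, Finset.sum_nat_mod,
      Finset.sum_congr rfl (fun s hs => (hside s hs).symm), ← Finset.sum_nat_mod]
  rw [hfin, hdeg]

/-- Every `(m+2)`-angulation `Γ` of the annulus `A(p,q)` contains at
least one bridging arc; that is, at least one `σ`-orbit of arcs of `Γ` consists of
bridging arcs. -/
theorem exists_bridging_arc (m p q : ℕ) (hm : 1 ≤ m) (hp : 1 ≤ p) (hq : 1 ≤ q)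
    (Γ : Angulation m p q) :
    ∃ a ∈ Γ.arcs, a.IsBridging := by
  classical
  by_contra hcon
  push_neg at hcon
  obtain ⟨reps, hcard, hsubs, hall, huniq⟩ := Γ.orbit_count
  have hm' : (0 : ℤ) < (m : ℤ) := by exact_mod_cast hm
  have hp' : (0 : ℤ) < (p : ℤ) := by exact_mod_cast hp
  have hK0 : (0 : ℤ) < (m : ℤ) * p := mul_pos hm' hp'
  -- the finset of candidate covering arcs
  set cand : Arc → Finset Arc := fun r =>
    match r with
    | .botPeriph u v => (Finset.Icc (-((v - 1) / ((m : ℤ) * p))) ((-u) / ((m : ℤ) * p))).image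
        (fun n => Arc.botPeriph (u + n * ((m : ℤ) * p)) (v + n * ((m : ℤ) * p)))
    | _ => (∅ : Finset Arc) with hcand
  set CA : Finset Arc := (reps.biUnion cand).filter (fun a => coversArcB a) with hCAdef
  -- every element of CA is a covering arc of Γ
  have hCA1 : ∀ a ∈ CA, a ∈ Γ.arcs ∧ coversArcB a = true := by
    intro a ha
    rw [hCAdef, Finset.mem_filter] at ha
    obtain ⟨hmem, hcov⟩ := ha
    refine ⟨?_, hcov⟩
    rw [Finset.mem_biUnion] at hmem
    obtain ⟨r, hr, har⟩ := hmem
    have hrarcs : r ∈ Γ.arcs := hsubs hr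
    cases r with
    | bridging x y => simp [hcand] at har
    | topPeriph u v => simp [hcand] at har
    | botPeriph u v =>
        simp only [hcand, Finset.mem_image] at har
        obtain ⟨n, _, rfl⟩ := har
        exact mem_arcs_shift Γ (Arc.botPeriph u v) hrarcs n
  -- CA contains every covering arc of Γ
  have hCA2 : ∀ a ∈ Γ.arcs, coversArcB a = true → a ∈ CA := by
    intro a ha hcov
    obtain ⟨r, hr, n, hn⟩ := hall a ha
    cases a with
    | bridging x y => simp [coversArcB] at hcov
    | topPeriph u v => simp [coversArcB] at hcov
    | botPeriph u' v' =>
        simp only [coversArcB, Bool.and_eq_true, decide_eq_true_eq] at hcov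
        obtain ⟨hu', hv'⟩ := hcov
        rw [hCAdef, Finset.mem_filter]
        constructor
        · rw [Finset.mem_biUnion]
          refine ⟨r, hr, ?_⟩
          have hr' : r = Arc.botPeriph (u' + n * ((m : ℤ) * p)) (v' + n * ((m : ℤ) * p)) := by
            rw [← hn]; rfl
          subst hr'
          simp only [hcand, Finset.mem_image]
          refine ⟨-n, ?_, ?_⟩
          · rw [Finset.mem_Icc]
            constructor
            · -- lower bound: -((v'+nK-1)/K) ≤ -n , i.e. n ≤ (v'+nK-1)/K
              have h1 : n * ((m : ℤ) * p) ≤ v' + n * ((m : ℤ) * p) - 1 := by omega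
              have := (Int.le_ediv_iff_mul_le hK0).mpr h1
              omega
            · -- upper bound: -n ≤ (-(u'+nK))/K , i.e. (-n)*K ≤ -(u'+nK)
              refine (Int.le_ediv_iff_mul_le hK0).mpr ?_
              nlinarith [hu']
          · congr 1 <;> ring
        · simp [coversArcB, hu', hv']
  -- the choice of the two faces of each arc
  have hfaces : ∀ a : Arc, ∃ FG : Finset Side × Finset Side,
      a ∈ Γ.arcs → (FG.1 ∈ Γ.faces ∧ FG.2 ∈ Γ.faces ∧ FG.1 ≠ FG.2 ∧
        Side.arc a ∈ FG.1 ∧ Side.arc a ∈ FG.2 ∧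
        ∀ H ∈ Γ.faces, Side.arc a ∈ H → H = FG.1 ∨ H = FG.2) := by
    intro a
    by_cases ha : a ∈ Γ.arcs
    · obtain ⟨F, hF, G, hG, hne, h1, h2, h3⟩ := Γ.arc_two_faces a ha
      exact ⟨(F, G), fun _ => ⟨hF, hG, hne, h1, h2, h3⟩⟩
    · exact ⟨(∅, ∅), fun h => absurd h ha⟩
  choose g hg using hfaces
  obtain ⟨⟨hF0faces, hF0mem⟩, hF0uniq⟩ := (Γ.botSeg_face 0).choose_spec
  set F0 : Finset Side := (Γ.botSeg_face 0).choose with hF0def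
  set FS : Finset (Finset Side) :=
    insert F0 (CA.biUnion (fun a => {(g a).1, (g a).2})) with hFSdef
  set SC : Finset Side := insert (Side.botSeg 0) (CA.image Side.arc) with hSCdef
  -- every member of FS is a face
  have hFSfaces : ∀ F ∈ FS, F ∈ Γ.faces := by
    intro F hF
    rw [hFSdef, Finset.mem_insert] at hF
    rcases hF with rfl | hF
    · exact hF0faces
    · rw [Finset.mem_biUnion] at hF
      obtain ⟨a, haCA, hFa⟩ := hF
      have ha := (hCA1 a haCA).1
      have hga := hg a ha
      simp only [Finset.mem_insert, Finset.mem_singleton] at hFa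
      rcases hFa with rfl | rfl
      · exact hga.1
      · exact hga.2.1
  -- every member of SC covers
  have hSCcov : ∀ s ∈ SC, coversB s = true := by
    intro s hs
    rw [hSCdef, Finset.mem_insert] at hs
    rcases hs with rfl | hs
    · simp [coversB]
    · rw [Finset.mem_image] at hs
      obtain ⟨a, haCA, rfl⟩ := hs
      simpa [coversB] using (hCA1 a haCA).2
  -- every covering side of a face lies in SC
  have hcs : ∀ F ∈ Γ.faces, ∀ s ∈ F, coversB s = true → s ∈ SC := by
    intro F hF s hs hcov
    rcases Γ.face_sides F hF s hs with ⟨a, ha, rfl⟩ | ⟨i, rfl⟩ | ⟨j, rfl⟩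
    · rw [hSCdef]
      refine Finset.mem_insert_of_mem ?_
      rw [Finset.mem_image]
      exact ⟨a, hCA2 a ha (by simpa [coversB] using hcov), rfl⟩
    · have : i = 0 := by simpa [coversB] using hcov
      subst this
      exact Finset.mem_insert_self _ _
    · simp [coversB] at hcov
  -- every face containing a member of SC lies in FS
  have hcf : ∀ F ∈ Γ.faces, ∀ s ∈ SC, s ∈ F → F ∈ FS := by
    intro F hF s hsSC hsF
    rw [hSCdef, Finset.mem_insert] at hsSC
    rcases hsSC with rfl | hs
    · have : F = F0 := hF0uniq F ⟨hF, hsF⟩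
      rw [hFSdef, this]; exact Finset.mem_insert_self _ _
    · rw [Finset.mem_image] at hs
      obtain ⟨a, haCA, rfl⟩ := hs
      have ha := (hCA1 a haCA).1
      have hga := hg a ha
      rw [hFSdef]
      refine Finset.mem_insert_of_mem ?_
      rw [Finset.mem_biUnion]
      refine ⟨a, haCA, ?_⟩
      rcases hga.2.2.2.2.2 F hF hsF with rfl | rfl
      · exact Finset.mem_insert_self _ _
      · exact Finset.mem_insert_of_mem (Finset.mem_singleton_self _)
  -- multiplicity of each covering side among faces of FS
  have hmult0 : (FS.filter (fun F => Side.botSeg 0 ∈ F)).card = 1 := by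
    have : FS.filter (fun F => Side.botSeg 0 ∈ F) = {F0} := by
      ext F
      simp only [Finset.mem_filter, Finset.mem_singleton]
      constructor
      · rintro ⟨hFFS, hmem⟩
        exact hF0uniq F ⟨hFSfaces F hFFS, hmem⟩
      · rintro rfl
        exact ⟨Finset.mem_insert_self _ _, hF0mem⟩
    rw [this, Finset.card_singleton]
  have hmult2 : ∀ a ∈ CA, (FS.filter (fun F => Side.arc a ∈ F)).card = 2 := by
    intro a haCA
    have ha := (hCA1 a haCA).1
    have hga := hg a ha
    have heq : FS.filter (fun F => Side.arc a ∈ F) = {(g a).1, (g a).2} := by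
      ext F
      simp only [Finset.mem_filter, Finset.mem_insert, Finset.mem_singleton]
      constructor
      · rintro ⟨hFFS, hmem⟩
        exact hga.2.2.2.2.2 F (hFSfaces F hFFS) hmem
      · rintro (rfl | rfl)
        · refine ⟨?_, hga.2.2.2.1⟩
          rw [hFSdef]
          exact Finset.mem_insert_of_mem (Finset.mem_biUnion.mpr
            ⟨a, haCA, Finset.mem_insert_self _ _⟩)
        · refine ⟨?_, hga.2.2.2.2.1⟩
          rw [hFSdef]
          exact Finset.mem_insert_of_mem (Finset.mem_biUnion.mpr
            ⟨a, haCA, Finset.mem_insert_of_mem (Finset.mem_singleton_self _)⟩)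
    rw [heq, Finset.card_insert_of_notMem (by simpa using hga.2.2.1),
      Finset.card_singleton]
  -- the double count
  set N : ℕ := ∑ F ∈ FS, (F.filter (fun s => coversB s)).card with hNdef
  have hNeven : N % 2 = 0 := by
    rw [hNdef, Finset.sum_nat_mod,
      Finset.sum_congr rfl (fun F hF => face_parity Γ hcon F (hFSfaces F hF))]
    simp
  have hNodd : N = 1 + 2 * CA.card := by
    have hfilter : ∀ F ∈ FS, F.filter (fun s => coversB s) = SC.filter (fun s => s ∈ F) := by
      intro F hFFS
      have hF := hFSfaces F hFFS
      ext s
      simp only [Finset.mem_filter]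
      constructor
      · rintro ⟨hsF, hcov⟩
        exact ⟨hcs F hF s hsF hcov, hsF⟩
      · rintro ⟨hsSC, hsF⟩
        exact ⟨hsF, hSCcov s hsSC⟩
    rw [hNdef, Finset.sum_congr rfl (fun F hF => by rw [hfilter F hF])]
    have hswap : (∑ F ∈ FS, (SC.filter (fun s => s ∈ F)).card)
        = ∑ s ∈ SC, (FS.filter (fun F => s ∈ F)).card := by
      rw [Finset.sum_congr rfl (fun F (_ : F ∈ FS) => Finset.card_filter _ _),
        Finset.sum_comm]
      exact Finset.sum_congr rfl fun s _ => (Finset.card_filter _ _).symm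
    rw [hswap, hSCdef]
    have hnotmem : Side.botSeg 0 ∉ CA.image Side.arc := by
      simp
    rw [Finset.sum_insert hnotmem, hmult0]
    congr 1
    rw [Finset.sum_image (fun a _ b _ h => Side.arc.inj h)]
    rw [Finset.sum_congr rfl (fun a ha => hmult2 a ha)]
    rw [Finset.sum_const, smul_eq_mul, mul_comm]
  omega


end ClusterAnnulus
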